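/- For each integer l ≥ 0, the polynomial ψ*_l(y) = (1/√(l!)) Σ_{j=0}^{⌊l/4⌋} (1/j!) D_y^{4j} y^l satisfies B* ψ*_l = -(l/4) ψ*_l, where B* = -D_y⁴ - (1/4) y D_y. -/

import Mathlib

/-!
Write `T j = D^(n j) y^l / j!`, so that `ψ = c ∑_{j ≤ l/n} T j`. Homogeneity of `y^l` gives the
Euler relation `y D (T j) = (l - n j) T j`, while `D^n (T j) = (j + 1) T (j + 1)`. Since
`T (l/n + 1) = 0`, shifting the index turns `D^n ψ` into `c ∑ j T j`, and then
`-D^n ψ - (1/n) y ψ' = -c ∑ (j + (l - n j)/n) T j = -(l/n) ψ`.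
-/

open Finset Nat
open scoped ContDiff

theorem sum_range_succ_shift_of_eq_zero {M : Type*} [AddCommMonoid M] (f : ℕ → M) (n : ℕ)
    (h₀ : f 0 = 0) (hn : f (n + 1) = 0) :
    ∑ i ∈ range (n + 1), f (i + 1) = ∑ i ∈ range (n + 1), f i := by
  rw [sum_range_succ, hn, add_zero, sum_range_succ', h₀, add_zero]

section

variable {𝕜 : Type*} [NontriviallyNormedField 𝕜]

theorem iterate_deriv_const_mul_sum {ι : Type*} (s : Finset ι)
    (c : 𝕜) (a : ι → 𝕜) {f : ι → 𝕜 → 𝕜} (hf : ∀ i ∈ s, ContDiff 𝕜 ∞ (f i)) (k : ℕ) :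
    deriv^[k] (fun z => c * ∑ i ∈ s, a i * f i z) =
      fun z => c * ∑ i ∈ s, a i * deriv^[k] (f i) z := by
  induction k with
  | zero => rfl
  | succ k ih =>
    ext z
    have hd : ∀ i ∈ s, DifferentiableAt 𝕜 (fun z => a i * deriv^[k] (f i) z) z := fun i hi =>
      (((hf i hi).iterate_deriv k).differentiable (by simp)).differentiableAt.const_mul _
    simp only [Function.iterate_succ_apply', ih, deriv_const_mul_field', deriv_fun_sum hd]

theorem iterate_deriv_pow_apply (l k : ℕ) (y : 𝕜) :
    deriv^[k] (fun w : 𝕜 => w ^ l) y = l.descFactorial k * y ^ (l - k) := by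
  rw [← iteratedDeriv_eq_iterate, iteratedDeriv_pow]

theorem iterate_deriv_pow_eq_zero {l k : ℕ} (h : l < k) (y : 𝕜) :
    deriv^[k] (fun w : 𝕜 => w ^ l) y = 0 := by
  rw [iterate_deriv_pow_apply, Nat.descFactorial_eq_zero_iff_lt.mpr h, Nat.cast_zero, zero_mul]

theorem mul_iterate_deriv_succ_pow (l m : ℕ) (y : 𝕜) :
    y * deriv^[m + 1] (fun w : 𝕜 => w ^ l) y = (l - m) * deriv^[m] (fun w : 𝕜 => w ^ l) y := by
  rcases lt_or_ge m l with hml | hlm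
  · have hpow : y ^ (l - m) = y ^ (l - (m + 1)) * y := by rw [← pow_succ]; congr 1; omega
    rw [iterate_deriv_pow_apply, iterate_deriv_pow_apply, Nat.descFactorial_succ, hpow]
    push_cast [Nat.cast_sub hml.le]
    ring
  · rcases hlm.eq_or_lt with rfl | hlm
    · rw [iterate_deriv_pow_eq_zero (Nat.lt_succ_self _), sub_self, mul_zero, zero_mul]
    · rw [iterate_deriv_pow_eq_zero (by omega), iterate_deriv_pow_eq_zero hlm, mul_zero, mul_zero]

theorem sum_div_factorial_iterate_deriv_pow_shift [CharZero 𝕜] {n : ℕ} (hn : 0 < n) (l : ℕ)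
    (y : 𝕜) :
    ∑ j ∈ range (l / n + 1), 1 / (j ! : 𝕜) * deriv^[n + n * j] (fun w : 𝕜 => w ^ l) y =
      ∑ j ∈ range (l / n + 1),
        (j : 𝕜) * (1 / (j ! : 𝕜) * deriv^[n * j] (fun w : 𝕜 => w ^ l) y) := by
  have hvanish : deriv^[n * (l / n + 1)] (fun w : 𝕜 => w ^ l) y = 0 :=
    iterate_deriv_pow_eq_zero (by rw [Nat.mul_add_one, mul_comm]; exact Nat.lt_div_mul_add hn) y
  rw [← sum_range_succ_shift_of_eq_zero
    (fun j => (j : 𝕜) * (1 / (j ! : 𝕜) * deriv^[n * j] (fun w : 𝕜 => w ^ l) y)) _ (by simp)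
    (by simp only [hvanish, mul_zero])]
  refine sum_congr rfl fun j _ => ?_
  rw [Nat.factorial_succ, Nat.mul_add_one, add_comm (n * j)]
  push_cast
  field_simp

theorem sum_div_factorial_iterate_deriv_pow_eigenfunction [CharZero 𝕜] {n : ℕ} (hn : 0 < n)
    (l : ℕ) (c y : 𝕜) :
    let ψ := fun z => (c * ∑ j ∈ range (l / n + 1),
      1 / (j ! : 𝕜) * deriv^[n * j] (fun w : 𝕜 => w ^ l) z)
    (-deriv^[n] ψ y - 1 / n * y * deriv ψ y = -(l / n) * ψ y) := by
  intro ψ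
  have hsmooth : ∀ j ∈ range (l / n + 1), ContDiff 𝕜 ∞ (deriv^[n * j] fun w : 𝕜 => w ^ l) :=
    fun j _ => (contDiff_id.pow l).iterate_deriv _
  have hDn := congrFun (iterate_deriv_const_mul_sum _ c (fun j => 1 / (j ! : 𝕜)) hsmooth n) y
  have hD1 := congrFun (iterate_deriv_const_mul_sum _ c (fun j => 1 / (j ! : 𝕜)) hsmooth 1) y
  simp only [← Function.iterate_add_apply, Function.iterate_one] at hDn hD1
  have euler : y * ∑ j ∈ range (l / n + 1), 1 / (j ! : 𝕜) * deriv^[1 + n * j] (· ^ l) y =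
      ∑ j ∈ range (l / n + 1), ((l : 𝕜) - n * j) * (1 / (j ! : 𝕜) * deriv^[n * j] (· ^ l) y) := by
    rw [mul_sum]
    refine sum_congr rfl fun j _ => ?_
    rw [mul_left_comm, add_comm, mul_iterate_deriv_succ_pow]
    push_cast
    ring
  have hsplit :
      ∑ j ∈ range (l / n + 1), ((l : 𝕜) - n * j) * (1 / (j ! : 𝕜) * deriv^[n * j] (· ^ l) y) +
      n * ∑ j ∈ range (l / n + 1), (j : 𝕜) * (1 / (j ! : 𝕜) * deriv^[n * j] (· ^ l) y) =
      l * ∑ j ∈ range (l / n + 1), 1 / (j ! : 𝕜) * deriv^[n * j] (· ^ l) y := by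
    rw [mul_sum, mul_sum, ← sum_add_distrib]
    exact sum_congr rfl fun j _ => by ring
  have hn0 : (n : 𝕜) ≠ 0 := Nat.cast_ne_zero.mpr hn.ne'
  simp only [ψ, hDn, hD1]
  linear_combination (norm := skip) (-c) * sum_div_factorial_iterate_deriv_pow_shift hn l y
    - (c / n) * euler - (c / n) * hsplit
  field_simp
  ring

end

/-- the polynomials ψ*_l are eigenfunctions of the adjoint operator
B* g = -g⁗ - (1/4) y g' with eigenvalues -l/4. -/
theorem adjoint_polynomial_eigenfunctions (l : ℕ) :
    ∀ y : ℝ,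
      (- deriv^[4] (fun z => (1 / Real.sqrt (Nat.factorial l)) *
            ∑ j ∈ Finset.range (l / 4 + 1),
              (1 / (Nat.factorial j : ℝ)) * deriv^[4 * j] (fun w : ℝ => w ^ l) z) y
        - (1 / 4) * y *
          deriv (fun z => (1 / Real.sqrt (Nat.factorial l)) *
            ∑ j ∈ Finset.range (l / 4 + 1),
              (1 / (Nat.factorial j : ℝ)) * deriv^[4 * j] (fun w : ℝ => w ^ l) z) y)
      = -((l : ℝ) / 4) *
          ((1 / Real.sqrt (Nat.factorial l)) *
            ∑ j ∈ Finset.range (l / 4 + 1),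
              (1 / (Nat.factorial j : ℝ)) * deriv^[4 * j] (fun w : ℝ => w ^ l) y) := fun y => by
  exact_mod_cast sum_div_factorial_iterate_deriv_pow_eigenfunction (n := 4) four_pos l
    (1 / Real.sqrt (Nat.factorial l)) y
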